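/- Let μ be a centred probability measure on ℝ with no atoms, and let F : ℝ × ℝ → ℝ be continuous, serrated with ridge a : ℝ → ℝ ∪ {−∞,+∞}, with a continuous partial derivative F_s(w,s) = ∂F/∂s(w,s) such that for each s₀ > 0 the function w ↦ F_s(w, s₀)/(s₀ − w) is strictly increasing on (−∞, s₀). Define g(w) = min(β_μ(w), max(a(w), 0, w)) and assume w ↦ F(w, g(w)) is μ-integrable. Then for every Rogers-admissible probability measure π with marginal μ such that F is π-integrable, one has ∫ F dπ ≤ ∫ F(w, g(w)) dμ(w). -/

import Mathlib

open MeasureTheory Set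

noncomputable section

/-- The set `M = {(x,y) : y ≥ 0 and y ≥ x}`. -/
def MSet : Set (ℝ × ℝ) := {p : ℝ × ℝ | 0 ≤ p.2 ∧ p.1 ≤ p.2}

/-- A probability measure on `ℝ` is centred if the identity is integrable with mean `0`. -/
def Centred (μ : Measure ℝ) : Prop :=
  Integrable (fun x : ℝ => x) μ ∧ (∫ x, x ∂μ) = 0

/-- Strict supermodularity of a bivariate function. -/
def StrictlySupermodular (F : ℝ × ℝ → ℝ) : Prop :=
  ∀ w₁ w₂ s₁ s₂ : ℝ, w₁ < w₂ → s₁ < s₂ →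
    F (w₁, s₂) + F (w₂, s₁) < F (w₁, s₁) + F (w₂, s₂)

/-- `F` is serrated with ridge `a : ℝ → EReal`: for every `w`, `s ↦ F (w, s)` is
strictly increasing on `{s | s < a w}` and strictly decreasing on `{s | a w < s}`. -/
def SerratedWithRidge (F : ℝ × ℝ → ℝ) (a : ℝ → EReal) : Prop :=
  ∀ w : ℝ,
    StrictMonoOn (fun s : ℝ => F (w, s)) {s : ℝ | (s : EReal) < a w} ∧
    StrictAntiOn (fun s : ℝ => F (w, s)) {s : ℝ | a w < (s : EReal)}

/-- Rogers' conditions for `π` to be the joint law of the terminal value and the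
running maximum of a UI martingale started at `0` with terminal law `μ`. -/
def RogersAdmissible (μ : Measure ℝ) (π : Measure (ℝ × ℝ)) : Prop :=
  Integrable (fun p : ℝ × ℝ => p.1) π ∧
  (∫ p : ℝ × ℝ, p.1 ∂π) = 0 ∧
  π MSetᶜ = 0 ∧
  (∀ s : ℝ, 0 ≤ s →
    s * (π {p : ℝ × ℝ | s ≤ p.2}).toReal ≤ ∫ p in {p : ℝ × ℝ | s ≤ p.2}, p.1 ∂π) ∧
  Measure.map Prod.fst π = μ

/-- The barycenter function of `μ`. -/
def barycenter (μ : Measure ℝ) (w : ℝ) : ℝ :=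
  if 0 < (μ (Ici w)).toReal then (∫ x in Ici w, x ∂μ) / (μ (Ici w)).toReal else w

/-- `g(w) = min(β_μ(w), max(a(w), 0, w))`, the max computed in `EReal`. -/
def ridgeG (μ : Measure ℝ) (a : ℝ → EReal) (w : ℝ) : ℝ :=
  (min ((barycenter μ w : ℝ) : EReal) (max (a w) (max (0 : EReal) ((w : ℝ) : EReal)))).toReal

/-!
Weak duality. The ridge law `g` is monotone (this is where the ratio condition on `F_s` enters
first); let `q(s) = inf {x | s ≤ g x}` and `λ(s) = (F_s(q(s), s) / (s - q(s)))⁺`. The ratio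
condition gives `λ(s) (s - x) ≤ F_s(x, s)` when `x < s ≤ g x`, and the reverse inequality when
`g x < s` and `μ` charges `(s, ∞)`, which `π`-a.e. holds for `s` below the maximum `y`.
Integrating in `s` between `g x` and `y` yields the pathwise bound
`F(x, y) - F(x, g x) ≤ ∫ λ(s) (s - x) (1{s ≤ y} - 1{s ≤ g x}) ds`.
For fixed `s`, the `π`-integral of the right-hand integrand is
`λ(s) (∫_{g x ≥ s} (x - s) dμ - ∫_{y ≥ s} (x - s) dπ) ≤ 0`: the second integral is `≥ 0` by
Rogers' condition (iv), and the first is `≤ 0` because `{g ≥ s}` is a.e. `[q(s), ∞)` and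
`β_μ < s` just left of `q(s)`. Fubini's theorem, justified by bounding the negative part of the
integrand by `F(x, g x) - F(x, y)`, finishes the proof.
-/

open Filter Topology

section TailIntegral

variable {μ : Measure ℝ} {f : ℝ → ℝ}

theorem tendsto_setIntegral_Ici_of_eventually_indicator {l : Filter ℝ} [l.IsCountablyGenerated]
    (hf : Integrable f μ) {S : Set ℝ} (hS : MeasurableSet S)
    (h : ∀ x, ∀ᶠ w in l, (Ici w).indicator f x = S.indicator f x) :
    Tendsto (fun w => ∫ x in Ici w, f x ∂μ) l (𝓝 (∫ x in S, f x ∂μ)) := by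
  simp_rw [← integral_indicator measurableSet_Ici, ← integral_indicator hS]
  exact tendsto_integral_filter_of_dominated_convergence (fun x => ‖f x‖)
    (.of_forall fun _ => hf.aestronglyMeasurable.indicator measurableSet_Ici)
    (.of_forall fun _ => .of_forall fun _ => norm_indicator_le_norm_self _ _) hf.norm
    (.of_forall fun x => tendsto_const_nhds.congr' (EventuallyEq.symm (h x)))

theorem tendsto_setIntegral_Ici_nhdsLT (hf : Integrable f μ) (c : ℝ) :
    Tendsto (fun w => ∫ x in Ici w, f x ∂μ) (𝓝[<] c) (𝓝 (∫ x in Ici c, f x ∂μ)) := by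
  refine tendsto_setIntegral_Ici_of_eventually_indicator hf measurableSet_Ici fun x => ?_
  rcases le_or_gt c x with hcx | hxc
  · filter_upwards [self_mem_nhdsWithin] with w (hw : w < c)
    rw [indicator_of_mem (mem_Ici.2 (hw.le.trans hcx)), indicator_of_mem (mem_Ici.2 hcx)]
  · filter_upwards [Ioo_mem_nhdsLT hxc] with w hw
    rw [indicator_of_notMem (notMem_Ici.2 hw.1), indicator_of_notMem (notMem_Ici.2 hxc)]

theorem tendsto_setIntegral_Ici_atBot (hf : Integrable f μ) :
    Tendsto (fun w => ∫ x in Ici w, f x ∂μ) atBot (𝓝 (∫ x, f x ∂μ)) := by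
  rw [← setIntegral_univ]
  refine tendsto_setIntegral_Ici_of_eventually_indicator hf MeasurableSet.univ fun x => ?_
  filter_upwards [eventually_le_atBot x] with w hw
  rw [indicator_of_mem (mem_Ici.2 hw), indicator_univ]

end TailIntegral

section Marginal

variable {α β : Type*} [MeasurableSpace α] [MeasurableSpace β] {π : Measure (α × β)}
  {μ : Measure α} {f : α → ℝ}

theorem MeasureTheory.Integrable.comp_fst_of_map_eq (hmap : Measure.map Prod.fst π = μ)
    (hf : Integrable f μ) : Integrable (fun p => f p.1) π :=
  (hmap ▸ hf).comp_measurable measurable_fst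

theorem integral_comp_fst_of_map_eq (hmap : Measure.map Prod.fst π = μ)
    (hf : AEStronglyMeasurable f μ) : ∫ p, f p.1 ∂π = ∫ x, f x ∂μ := by
  subst hmap
  exact (integral_map measurable_fst.aemeasurable hf).symm

end Marginal

section Fubini

variable {α β : Type*} [MeasurableSpace α] [MeasurableSpace β] {μ : Measure α} {ν : Measure β}

theorem lintegral_ofReal_le_lintegral_ofReal_neg {f : α → ℝ} (hf : Integrable f μ)
    (h : ∫ a, f a ∂μ ≤ 0) :
    ∫⁻ a, ENNReal.ofReal (f a) ∂μ ≤ ∫⁻ a, ENNReal.ofReal (-f a) ∂μ := by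
  have hfin {g : α → ℝ} (hg : Integrable g μ) : ∫⁻ a, ENNReal.ofReal (g a) ∂μ ≠ ⊤ :=
    ne_top_of_le_ne_top hg.2.ne (lintegral_mono fun a => Real.ofReal_le_enorm (g a))
  rw [integral_eq_lintegral_pos_part_sub_lintegral_neg_part hf, sub_nonpos] at h
  exact (ENNReal.toReal_le_toReal (hfin hf) (hfin hf.neg)).1 h

/-- By Tonelli, the positive part of `f` is controlled by the negative part section by section. -/
theorem integrable_prod_of_forall_integral_nonpos [SFinite μ] [SFinite ν] {f : α × β → ℝ}
    (hf : AEStronglyMeasurable f (μ.prod ν))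
    (hneg : ∫⁻ z, ENNReal.ofReal (-f z) ∂(μ.prod ν) ≠ ⊤)
    (hsect : ∀ b, Integrable (fun a => f (a, b)) μ) (hle : ∀ b, ∫ a, f (a, b) ∂μ ≤ 0) :
    Integrable f (μ.prod ν) := by
  have hpos : ∫⁻ z, ENNReal.ofReal (f z) ∂(μ.prod ν) ≤
      ∫⁻ z, ENNReal.ofReal (-f z) ∂(μ.prod ν) := by
    rw [lintegral_prod_symm _ hf.aemeasurable.ennreal_ofReal,
      lintegral_prod_symm (fun z => ENNReal.ofReal (-f z)) hf.neg.aemeasurable.ennreal_ofReal]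
    exact lintegral_mono fun b => lintegral_ofReal_le_lintegral_ofReal_neg (hsect b) (hle b)
  have hpart {g : α × β → ℝ} (hg : AEStronglyMeasurable g (μ.prod ν))
      (hfin : ∫⁻ z, ENNReal.ofReal (g z) ∂(μ.prod ν) ≠ ⊤) :
      Integrable (fun z => max (g z) 0) (μ.prod ν) :=
    (lintegral_ofReal_ne_top_iff_integrable
      (hg.aemeasurable.max aemeasurable_const).aestronglyMeasurable
      (.of_forall fun z => le_max_right (g z) 0)).1 (by simpa using hfin)
  convert (hpart hf (hpos.trans_lt hneg.lt_top).ne).sub (hpart (g := fun z => -f z) hf.neg hneg)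
    using 1
  ext z
  exact (max_zero_sub_max_neg_zero_eq_self (f z)).symm

end Fubini

section Barycenter

variable {μ : Measure ℝ} {w s : ℝ}

theorem barycenter_of_measureReal_eq_zero (h : μ.real (Ici w) = 0) : barycenter μ w = w :=
  if_neg h.not_gt

theorem barycenter_of_measureReal_pos (h : 0 < μ.real (Ici w)) :
    barycenter μ w = (∫ x in Ici w, x ∂μ) / μ.real (Ici w) :=
  if_pos h

theorem setIntegral_Ici_nonneg (hμ : Centred μ) (w : ℝ) : 0 ≤ ∫ t in Ici w, t ∂μ := by
  rcases le_or_gt 0 w with hw | hw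
  · exact setIntegral_nonneg measurableSet_Ici fun t ht => hw.trans ht
  have hsplit := integral_add_compl (measurableSet_Ici (a := w)) hμ.1
  rw [compl_Ici, hμ.2] at hsplit
  have : ∫ t in Iio w, t ∂μ ≤ 0 :=
    setIntegral_nonpos measurableSet_Iio fun t ht => (ht.trans hw).le
  linarith

variable [IsFiniteMeasure μ]

/-- Also valid when `μ([w, ∞)) = 0`: then both sides vanish. -/
theorem setIntegral_Ici_sub (hμ : Integrable (fun x : ℝ => x) μ) (w s : ℝ) :
    ∫ t in Ici w, (t - s) ∂μ = μ.real (Ici w) * (barycenter μ w - s) := by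
  rw [integral_sub hμ.integrableOn (integrable_const s), setIntegral_const, smul_eq_mul]
  rcases measureReal_nonneg.eq_or_lt' with h | h
  · rw [Measure.restrict_eq_zero.2 ((measureReal_eq_zero_iff).1 h), h]
    simp
  · rw [barycenter_of_measureReal_pos h]
    field_simp

theorem setIntegral_Ici_sub_nonpos (hμ : Integrable (fun x : ℝ => x) μ)
    (h : barycenter μ w ≤ s) : ∫ t in Ici w, (t - s) ∂μ ≤ 0 := by
  rw [setIntegral_Ici_sub hμ]
  exact mul_nonpos_of_nonneg_of_nonpos measureReal_nonneg (sub_nonpos.2 h)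

theorem lt_barycenter_of_setIntegral_Ici_sub_pos (hμ : Integrable (fun x : ℝ => x) μ)
    (h : 0 < ∫ t in Ici w, (t - s) ∂μ) : s < barycenter μ w :=
  not_le.1 fun hle => h.not_ge (setIntegral_Ici_sub_nonpos hμ hle)

theorem barycenter_lt_of_setIntegral_Ici_sub_neg (hμ : Integrable (fun x : ℝ => x) μ)
    (h : ∫ t in Ici w, (t - s) ∂μ < 0) : barycenter μ w < s := by
  rw [setIntegral_Ici_sub hμ] at h
  exact sub_neg.1 (neg_of_mul_neg_right h measureReal_nonneg)

theorem le_barycenter (hμ : Integrable (fun x : ℝ => x) μ) (w : ℝ) : w ≤ barycenter μ w := by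
  rcases measureReal_nonneg.eq_or_lt' with h | h
  · exact (barycenter_of_measureReal_eq_zero h).ge
  have hD : 0 ≤ ∫ t in Ici w, (t - w) ∂μ :=
    setIntegral_nonneg measurableSet_Ici fun t ht => sub_nonneg.2 ht
  rw [setIntegral_Ici_sub hμ] at hD
  exact sub_nonneg.1 (nonneg_of_mul_nonneg_right hD h)

theorem setIntegral_Ici_sub_mono (hμ : Integrable (fun x : ℝ => x) μ) {w₁ w₂ : ℝ}
    (h₁₂ : w₁ ≤ w₂) (h₂ : w₂ ≤ s) :
    ∫ t in Ici w₁, (t - s) ∂μ ≤ ∫ t in Ici w₂, (t - s) ∂μ := by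
  have hint : Integrable (fun t : ℝ => t - s) μ := hμ.sub (integrable_const s)
  rw [← Ico_union_Ici_eq_Ici h₁₂, setIntegral_union
    ((Iio_disjoint_Ici le_rfl).mono_left Ico_subset_Iio_self) measurableSet_Ici
    hint.integrableOn hint.integrableOn, add_le_iff_nonpos_left]
  exact setIntegral_nonpos measurableSet_Ico fun t ht => by linarith [ht.2]

theorem barycenter_mono (hμ : Integrable (fun x : ℝ => x) μ) : Monotone (barycenter μ) := by
  intro w₁ w₂ h₁₂
  rcases measureReal_nonneg.eq_or_lt' with h | h
  · rw [barycenter_of_measureReal_eq_zero h]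
    exact h₁₂.trans (le_barycenter hμ w₂)
  have hD : ∫ t in Ici w₁, (t - barycenter μ w₂) ∂μ ≤ 0 :=
    (setIntegral_Ici_sub_mono hμ h₁₂ (le_barycenter hμ w₂)).trans
      (setIntegral_Ici_sub_nonpos hμ le_rfl)
  rw [setIntegral_Ici_sub hμ] at hD
  exact sub_nonpos.1 (nonpos_of_mul_nonpos_right hD h)

theorem eventually_lt_barycenter (hμ : Integrable (fun x : ℝ => x) μ) (hs : μ (Ioi s) ≠ 0) :
    ∀ᶠ w in 𝓝[<] s, s < barycenter μ w := by
  have hint : Integrable (fun t : ℝ => t - s) μ := hμ.sub (integrable_const s)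
  have hpos : 0 < ∫ t in Ici s, (t - s) ∂μ := by
    rw [setIntegral_pos_iff_support_of_nonneg_ae
      (ae_restrict_of_forall_mem measurableSet_Ici fun t ht => sub_nonneg.2 ht) hint.integrableOn]
    convert pos_iff_ne_zero.2 hs using 2
    ext t
    simp [sub_eq_zero, lt_iff_le_and_ne, eq_comm, and_comm]
  filter_upwards [(tendsto_setIntegral_Ici_nhdsLT hint s).eventually (lt_mem_nhds hpos)]
    with w hw using lt_barycenter_of_setIntegral_Ici_sub_pos hμ hw

end Barycenter

section CentredBarycenter

variable {μ : Measure ℝ} [IsProbabilityMeasure μ] {s : ℝ}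

theorem exists_barycenter_lt (hμ : Centred μ) (hs : 0 < s) : ∃ w, barycenter μ w < s := by
  have hint : Integrable (fun t : ℝ => t - s) μ := hμ.1.sub (integrable_const s)
  have hmean : ∫ t, (t - s) ∂μ = -s := by
    rw [integral_sub hμ.1 (integrable_const s), hμ.2]
    simp
  obtain ⟨w, hw⟩ := ((tendsto_setIntegral_Ici_atBot hint).eventually
    (gt_mem_nhds (by linarith : ∫ t, (t - s) ∂μ < 0))).exists
  exact ⟨w, barycenter_lt_of_setIntegral_Ici_sub_neg hμ.1 hw⟩

theorem barycenter_nonneg (hμ : Centred μ) (w : ℝ) : 0 ≤ barycenter μ w := by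
  rcases measureReal_nonneg.eq_or_lt' with h | h
  · rw [barycenter_of_measureReal_eq_zero h]
    have hlt : ∀ᵐ t ∂μ, t < w := by
      rw [ae_iff]
      simpa [← Ici_def] using (measureReal_eq_zero_iff).1 h
    calc (0 : ℝ) = ∫ t, t ∂μ := hμ.2.symm
      _ ≤ ∫ _, w ∂μ := integral_mono_ae hμ.1 (integrable_const w) (hlt.mono fun t ht => ht.le)
      _ = w := by simp
  · have hD := setIntegral_Ici_sub hμ.1 w 0
    simp only [sub_zero] at hD
    exact nonneg_of_mul_nonneg_right (hD ▸ setIntegral_Ici_nonneg hμ w) h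

end CentredBarycenter

section PartialDeriv

variable {F Fs : ℝ × ℝ → ℝ} {a : ℝ → EReal} {x s : ℝ}

theorem intervalIntegrable_partialDeriv (hFs : Continuous Fs) (x b c : ℝ) :
    IntervalIntegrable (fun s => Fs (x, s)) volume b c :=
  (hFs.comp (continuous_const.prodMk continuous_id)).intervalIntegrable b c

theorem integral_partialDeriv_eq_sub
    (hderiv : ∀ w s : ℝ, HasDerivAt (fun t : ℝ => F (w, t)) (Fs (w, s)) s)
    (hFs : Continuous Fs) {x b c : ℝ} : ∫ s in b..c, Fs (x, s) = F (x, c) - F (x, b) :=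
  intervalIntegral.integral_eq_sub_of_hasDerivAt (fun s _ => hderiv x s)
    (intervalIntegrable_partialDeriv hFs x b c)

theorem SerratedWithRidge.partialDeriv_nonneg (hser : SerratedWithRidge F a)
    (hderiv : ∀ w s : ℝ, HasDerivAt (fun t : ℝ => F (w, t)) (Fs (w, s)) s)
    (h : (s : EReal) ≤ a x) : 0 ≤ Fs (x, s) := by
  have hmono : MonotoneOn (fun t => F (x, t)) (Iio s) :=
    (hser x).1.monotoneOn.mono fun t ht => (EReal.coe_lt_coe_iff.2 ht).trans_le h
  exact (hderiv x s).hasDerivWithinAt.nonneg_of_monotoneOn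
    (accPt_principal_iff_nhdsWithin.2 (by simpa using nhdsLT_neBot s)) hmono

theorem SerratedWithRidge.partialDeriv_nonpos (hser : SerratedWithRidge F a)
    (hderiv : ∀ w s : ℝ, HasDerivAt (fun t : ℝ => F (w, t)) (Fs (w, s)) s)
    (h : a x ≤ s) : Fs (x, s) ≤ 0 := by
  have hanti : AntitoneOn (fun t => F (x, t)) (Ioi s) :=
    (hser x).2.antitoneOn.mono fun t ht => h.trans_lt (EReal.coe_lt_coe_iff.2 ht)
  exact (hderiv x s).hasDerivWithinAt.nonpos_of_antitoneOn
    (accPt_principal_iff_nhdsWithin.2 (by simpa using nhdsGT_neBot s)) hanti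

theorem SerratedWithRidge.lt_ridge_of_partialDeriv_pos (hser : SerratedWithRidge F a)
    (hderiv : ∀ w s : ℝ, HasDerivAt (fun t : ℝ => F (w, t)) (Fs (w, s)) s)
    (h : 0 < Fs (x, s)) : (s : EReal) < a x :=
  not_le.1 fun hle => h.not_ge (hser.partialDeriv_nonpos hderiv hle)

theorem partialDeriv_pos_of_ratio_strictMonoOn {x' : ℝ}
    (hratio : StrictMonoOn (fun w : ℝ => Fs (w, s) / (s - w)) (Iio s))
    (hx'x : x' < x) (hxs : x < s) (h : 0 ≤ Fs (x', s)) : 0 < Fs (x, s) := by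
  have h' : 0 ≤ Fs (x', s) / (s - x') := div_nonneg h (by linarith)
  exact (div_pos_iff_of_pos_right (sub_pos.2 hxs)).1
    (h'.trans_lt (hratio (hx'x.trans hxs) hxs hx'x))

end PartialDeriv

section Ridge

variable {μ : Measure ℝ} {a : ℝ → EReal} {x s : ℝ}

theorem coe_ridgeG (μ : Measure ℝ) (a : ℝ → EReal) (x : ℝ) :
    (ridgeG μ a x : EReal) = min (barycenter μ x : EReal) (max (a x) (max 0 (x : EReal))) := by
  refine EReal.coe_toReal (ne_top_of_le_ne_top (EReal.coe_ne_top _) (min_le_left _ _)) ?_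
  refine (lt_min (EReal.bot_lt_coe _) ?_).ne'
  exact (EReal.bot_lt_coe 0).trans_le ((le_max_left _ _).trans (le_max_right _ _))

theorem ridgeG_le_barycenter : ridgeG μ a x ≤ barycenter μ x :=
  EReal.coe_le_coe_iff.1 ((coe_ridgeG μ a x).trans_le (min_le_left _ _))

theorem le_ridgeG_iff (hs : 0 < s) (hxs : x < s) :
    s ≤ ridgeG μ a x ↔ s ≤ barycenter μ x ∧ (s : EReal) ≤ a x := by
  rw [← EReal.coe_le_coe_iff, coe_ridgeG, le_min_iff, le_max_iff, le_max_iff]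
  simp [hs.not_ge, hxs.not_ge]

theorem le_ridgeG [IsFiniteMeasure μ] (hμ : Integrable (fun x : ℝ => x) μ) (a : ℝ → EReal)
    (x : ℝ) : x ≤ ridgeG μ a x := by
  rw [← EReal.coe_le_coe_iff, coe_ridgeG]
  exact le_min (EReal.coe_le_coe_iff.2 (le_barycenter hμ x))
    ((le_max_right _ _).trans (le_max_right _ _))

variable [IsProbabilityMeasure μ]

theorem ridgeG_nonneg (hμ : Centred μ) (a : ℝ → EReal) (x : ℝ) : 0 ≤ ridgeG μ a x := by
  rw [← EReal.coe_le_coe_iff, coe_ridgeG]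
  exact le_min (EReal.coe_le_coe_iff.2 (barycenter_nonneg hμ x))
    ((le_max_left _ _).trans (le_max_right _ _))

theorem ridgeG_mono {F Fs : ℝ × ℝ → ℝ} (hμ : Centred μ) (hser : SerratedWithRidge F a)
    (hderiv : ∀ w s : ℝ, HasDerivAt (fun t : ℝ => F (w, t)) (Fs (w, s)) s)
    (hratio : ∀ s₀ : ℝ, 0 < s₀ →
      StrictMonoOn (fun w : ℝ => Fs (w, s₀) / (s₀ - w)) (Iio s₀)) :
    Monotone (ridgeG μ a) := by
  intro x' x hx'x
  rcases le_or_gt (ridgeG μ a x') 0 with h0 | hs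
  · exact h0.trans (ridgeG_nonneg hμ a x)
  rcases le_or_gt (ridgeG μ a x') x with hsx | hxs
  · exact hsx.trans (le_ridgeG hμ.1 a x)
  rcases hx'x.eq_or_lt with rfl | hx'x
  · rfl
  obtain ⟨hβ, ha⟩ := (le_ridgeG_iff hs (hx'x.trans hxs)).1 le_rfl
  refine (le_ridgeG_iff hs hxs).2 ⟨hβ.trans (barycenter_mono hμ.1 hx'x.le), ?_⟩
  exact (hser.lt_ridge_of_partialDeriv_pos hderiv (partialDeriv_pos_of_ratio_strictMonoOn
    (hratio _ hs) hx'x hxs (hser.partialDeriv_nonneg hderiv ha))).le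

end Ridge

def ridgeInv (μ : Measure ℝ) (a : ℝ → EReal) (s : ℝ) : ℝ :=
  sInf {x | s ≤ ridgeG μ a x}

section RidgeInv

variable {μ : Measure ℝ} [IsProbabilityMeasure μ] {a : ℝ → EReal} {x s : ℝ}

theorem bddBelow_ridgeG_superlevel (hμ : Centred μ) (hs : 0 < s) :
    BddBelow {x | s ≤ ridgeG μ a x} := by
  obtain ⟨w, hw⟩ := exists_barycenter_lt hμ hs
  refine ⟨w, fun x (hx : s ≤ ridgeG μ a x) => le_of_not_gt fun hxw => ?_⟩
  exact hx.not_gt (ridgeG_le_barycenter.trans_lt ((barycenter_mono hμ.1 hxw.le).trans_lt hw))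

theorem ridgeInv_le (hμ : Centred μ) (hs : 0 < s) (h : s ≤ ridgeG μ a x) :
    ridgeInv μ a s ≤ x :=
  csInf_le (bddBelow_ridgeG_superlevel hμ hs) h

theorem ridgeInv_le_self (hμ : Centred μ) (hs : 0 < s) : ridgeInv μ a s ≤ s :=
  ridgeInv_le hμ hs (le_ridgeG hμ.1 a s)

theorem le_ridgeG_of_ridgeInv_lt (hμ : Centred μ) (hg : Monotone (ridgeG μ a))
    (h : ridgeInv μ a s < x) : s ≤ ridgeG μ a x := by
  obtain ⟨x', hx', hx'x⟩ := exists_lt_of_csInf_lt ⟨s, le_ridgeG hμ.1 a s⟩ h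
  exact hx'.trans (hg hx'x.le)

theorem le_ridgeInv_of_ridgeG_lt (hμ : Centred μ) (hg : Monotone (ridgeG μ a))
    (h : ridgeG μ a x < s) : x ≤ ridgeInv μ a s :=
  le_of_not_gt fun hlt => h.not_ge (le_ridgeG_of_ridgeInv_lt hμ hg hlt)

theorem ridgeInv_monotoneOn (hμ : Centred μ) : MonotoneOn (ridgeInv μ a) (Ioi 0) :=
  fun _ hs₁ _ _ h => csInf_le_csInf (bddBelow_ridgeG_superlevel hμ hs₁)
    ⟨_, le_ridgeG hμ.1 a _⟩ fun _ hx => h.trans hx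

theorem ridgeG_superlevel_ae_eq [NullSingletonClass μ] (hμ : Centred μ)
    (hg : Monotone (ridgeG μ a)) (hs : 0 < s) :
    {x | s ≤ ridgeG μ a x} =ᵐ[μ] Ici (ridgeInv μ a s) := by
  have hsub : {x | s ≤ ridgeG μ a x} ⊆ Ici (ridgeInv μ a s) := fun x hx => ridgeInv_le hμ hs hx
  have hsup : Ioi (ridgeInv μ a s) ⊆ {x | s ≤ ridgeG μ a x} :=
    fun x hx => le_ridgeG_of_ridgeInv_lt hμ hg hx
  exact hsub.eventuallyLE.antisymm (Ioi_ae_eq_Ici.symm.le.trans hsup.eventuallyLE)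

end RidgeInv

/-- The Lagrange multiplier of Rogers' constraint (iv) at level `s` in the dual problem. -/
def rogersMultiplier (μ : Measure ℝ) (a : ℝ → EReal) (Fs : ℝ × ℝ → ℝ) (s : ℝ) : ℝ :=
  if 0 < s ∧ ridgeInv μ a s < s then
    max (Fs (ridgeInv μ a s, s) / (s - ridgeInv μ a s)) 0
  else 0

section RogersMultiplier

variable {μ : Measure ℝ} {F Fs : ℝ × ℝ → ℝ} {a : ℝ → EReal} {x s : ℝ}

theorem rogersMultiplier_nonneg (μ : Measure ℝ) (a : ℝ → EReal) (Fs : ℝ × ℝ → ℝ) (s : ℝ) :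
    0 ≤ rogersMultiplier μ a Fs s := by
  unfold rogersMultiplier
  split_ifs
  exacts [le_max_right _ _, le_rfl]

theorem rogersMultiplier_of_lt (hs : 0 < s) (hq : ridgeInv μ a s < s) :
    rogersMultiplier μ a Fs s = max (Fs (ridgeInv μ a s, s) / (s - ridgeInv μ a s)) 0 :=
  if_pos ⟨hs, hq⟩

theorem pos_and_partialDeriv_pos_of_rogersMultiplier_ne_zero
    (h : rogersMultiplier μ a Fs s ≠ 0) : 0 < s ∧ 0 < Fs (ridgeInv μ a s, s) := by
  unfold rogersMultiplier at h
  split_ifs at h with hc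
  · refine ⟨hc.1, (div_pos_iff_of_pos_right (sub_pos.2 hc.2)).1 ?_⟩
    by_contra! hρ
    exact h (max_eq_right hρ)
  · exact absurd rfl h

variable [IsProbabilityMeasure μ]

theorem measurable_rogersMultiplier (hμ : Centred μ) (hFs : Continuous Fs) :
    Measurable (rogersMultiplier μ a Fs) := by
  -- `ridgeInv` is only monotone on `(0, ∞)`, so we pass through `exp ∘ log` there
  set q : ℝ → ℝ := fun s => ridgeInv μ a (Real.exp (Real.log s))
  have hq : Measurable q := by
    have hmono : Monotone fun u => ridgeInv μ a (Real.exp u) := fun u v h =>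
      ridgeInv_monotoneOn hμ (Real.exp_pos u) (Real.exp_pos v) (Real.exp_le_exp.2 h)
    exact hmono.measurable.comp Real.measurable_log
  have heq : rogersMultiplier μ a Fs =
      fun s => if 0 < s ∧ q s < s then max (Fs (q s, s) / (s - q s)) 0 else 0 := by
    funext s
    by_cases hs : 0 < s
    · simp [rogersMultiplier, q, Real.exp_log hs]
    · simp [rogersMultiplier, hs]
  rw [heq]
  refine Measurable.ite (measurableSet_Ioi.inter (measurableSet_lt hq measurable_id)) ?_
    measurable_const
  exact ((hFs.measurable.comp (hq.prodMk measurable_id)).div (measurable_id.sub hq)).max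
    measurable_const

theorem rogersMultiplier_mul_le_partialDeriv (hμ : Centred μ) (hser : SerratedWithRidge F a)
    (hderiv : ∀ w s : ℝ, HasDerivAt (fun t : ℝ => F (w, t)) (Fs (w, s)) s)
    (hratio : ∀ s₀ : ℝ, 0 < s₀ →
      StrictMonoOn (fun w : ℝ => Fs (w, s₀) / (s₀ - w)) (Iio s₀))
    (hs : 0 < s) (hxs : x < s) (hsg : s ≤ ridgeG μ a x) :
    rogersMultiplier μ a Fs s * (s - x) ≤ Fs (x, s) := by
  have hqx : ridgeInv μ a s ≤ x := ridgeInv_le hμ hs hsg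
  have hρ : 0 ≤ Fs (x, s) / (s - x) := div_nonneg
    (hser.partialDeriv_nonneg hderiv ((le_ridgeG_iff hs hxs).1 hsg).2) (sub_pos.2 hxs).le
  have hmul : rogersMultiplier μ a Fs s ≤ Fs (x, s) / (s - x) := by
    rw [rogersMultiplier_of_lt hs (hqx.trans_lt hxs)]
    exact max_le ((hratio s hs).monotoneOn (hqx.trans_lt hxs) hxs hqx) hρ
  calc rogersMultiplier μ a Fs s * (s - x) ≤ Fs (x, s) / (s - x) * (s - x) :=
        mul_le_mul_of_nonneg_right hmul (sub_pos.2 hxs).le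
    _ = Fs (x, s) := div_mul_cancel₀ _ (sub_pos.2 hxs).ne'

theorem partialDeriv_le_rogersMultiplier_mul (hμ : Centred μ) (hser : SerratedWithRidge F a)
    (hderiv : ∀ w s : ℝ, HasDerivAt (fun t : ℝ => F (w, t)) (Fs (w, s)) s)
    (hratio : ∀ s₀ : ℝ, 0 < s₀ →
      StrictMonoOn (fun w : ℝ => Fs (w, s₀) / (s₀ - w)) (Iio s₀))
    (hg : Monotone (ridgeG μ a)) (hs : 0 < s) (hgs : ridgeG μ a x < s)
    (hμs : μ (Ioi s) ≠ 0) : Fs (x, s) ≤ rogersMultiplier μ a Fs s * (s - x) := by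
  have hxs : x < s := (le_ridgeG hμ.1 a x).trans_lt hgs
  have hxq : x ≤ ridgeInv μ a s := le_ridgeInv_of_ridgeG_lt hμ hg hgs
  rcases (ridgeInv_le_self (a := a) hμ hs).lt_or_eq with hqs | hqs
  · have hmul : Fs (x, s) / (s - x) ≤ rogersMultiplier μ a Fs s := by
      rw [rogersMultiplier_of_lt hs hqs]
      exact ((hratio s hs).monotoneOn hxs hqs hxq).trans (le_max_left _ _)
    calc Fs (x, s) = Fs (x, s) / (s - x) * (s - x) :=
          (div_mul_cancel₀ _ (sub_pos.2 hxs).ne').symm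
      _ ≤ rogersMultiplier μ a Fs s * (s - x) :=
          mul_le_mul_of_nonneg_right hmul (sub_pos.2 hxs).le
  -- When `ridgeInv μ a s = s` the multiplier vanishes, and if `Fs (x, s) > 0` then a point
  -- `x' ∈ (x, s)` with `s < β_μ(x')` would lie in the superlevel set `{s ≤ g}`.
  rw [rogersMultiplier, if_neg fun h => h.2.ne hqs, zero_mul]
  by_contra! hpos
  obtain ⟨x', hx', hβ⟩ :=
    (Eventually.and (Ioo_mem_nhdsLT hxs) (eventually_lt_barycenter hμ.1 hμs)).exists
  have ha : (s : EReal) < a x' := hser.lt_ridge_of_partialDeriv_pos hderiv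
    (partialDeriv_pos_of_ratio_strictMonoOn (hratio s hs) hx'.1 hx'.2 hpos.le)
  have := ridgeInv_le hμ hs ((le_ridgeG_iff hs hx'.2).2 ⟨hβ.le, ha.le⟩)
  linarith [hx'.2]

theorem setIntegral_Ici_ridgeInv_sub_nonpos (hμ : Centred μ) (hser : SerratedWithRidge F a)
    (hderiv : ∀ w s : ℝ, HasDerivAt (fun t : ℝ => F (w, t)) (Fs (w, s)) s)
    (hFs : Continuous Fs) (hs : 0 < s) (hpos : 0 < Fs (ridgeInv μ a s, s)) :
    ∫ t in Ici (ridgeInv μ a s), (t - s) ∂μ ≤ 0 := by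
  set q := ridgeInv μ a s
  have hFs_near : ∀ᶠ x in 𝓝 q, 0 < Fs (x, s) :=
    ((hFs.comp (continuous_id.prodMk continuous_const)).tendsto q).eventually_const_lt hpos
  -- Just left of `q`, `x` is outside the superlevel set `{s ≤ g}` although `s < a x`,
  -- so it is the barycenter that keeps `g x` below `s`.
  have hD : ∀ᶠ x in 𝓝[<] q, ∫ t in Ici x, (t - s) ∂μ ≤ 0 := by
    filter_upwards [self_mem_nhdsWithin, nhdsWithin_le_nhds hFs_near] with x (hxq : x < q) hx
    have hxs : x < s := hxq.trans_le (ridgeInv_le_self hμ hs)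
    refine setIntegral_Ici_sub_nonpos hμ.1 (le_of_not_gt fun hβ => hxq.not_ge ?_)
    exact ridgeInv_le hμ hs ((le_ridgeG_iff hs hxs).2
      ⟨hβ.le, (hser.lt_ridge_of_partialDeriv_pos hderiv hx).le⟩)
  exact le_of_tendsto (tendsto_setIntegral_Ici_nhdsLT (hμ.1.sub (integrable_const s)) q) hD

end RogersMultiplier

section RogersAdmissible

variable {μ : Measure ℝ} {π : Measure (ℝ × ℝ)} [IsFiniteMeasure π] {s : ℝ}

theorem setIntegral_sub_fst_nonpos (h1 : Integrable (fun p : ℝ × ℝ => p.1) π)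
    (hrog : s * π.real {p : ℝ × ℝ | s ≤ p.2} ≤ ∫ p in {p : ℝ × ℝ | s ≤ p.2}, p.1 ∂π) :
    ∫ p in {p : ℝ × ℝ | s ≤ p.2}, (s - p.1) ∂π ≤ 0 := by
  rw [integral_sub (integrable_const s) h1.integrableOn, setIntegral_const, smul_eq_mul]
  linarith

theorem measure_snd_ge_eq_zero [NullSingletonClass μ]
    (h1 : Integrable (fun p : ℝ × ℝ => p.1) π) (hmap : Measure.map Prod.fst π = μ)
    (hrog : s * π.real {p : ℝ × ℝ | s ≤ p.2} ≤ ∫ p in {p : ℝ × ℝ | s ≤ p.2}, p.1 ∂π)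
    (hμs : μ (Ioi s) = 0) : π {p : ℝ × ℝ | s ≤ p.2} = 0 := by
  set A := {p : ℝ × ℝ | s ≤ p.2}
  have hlt : ∀ᵐ p ∂π, p.1 < s := by
    have : π (Prod.fst ⁻¹' Ici s) = 0 := by
      rw [← Measure.map_apply measurable_fst measurableSet_Ici, hmap,
        ← measure_congr Ioi_ae_eq_Ici, hμs]
    simpa [ae_iff, preimage, Ici_def] using this
  have hnonneg : 0 ≤ᵐ[π.restrict A] fun p => s - p.1 :=
    ae_restrict_of_ae (hlt.mono fun p hp => sub_nonneg.2 hp.le)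
  have hzero := (setIntegral_eq_zero_iff_of_nonneg_ae hnonneg
    ((integrable_const s).sub h1).integrableOn).1
    (le_antisymm (setIntegral_sub_fst_nonpos h1 hrog) (integral_nonneg_of_ae hnonneg))
  have hfalse : ∀ᵐ p ∂π.restrict A, False := by
    filter_upwards [hzero, ae_restrict_of_ae hlt] with p hp hps
    exact (sub_pos.2 hps).ne' hp
  rwa [eventually_false_iff_eq_bot, ae_eq_bot, Measure.restrict_eq_zero] at hfalse

theorem ae_measure_Ioi_ne_zero [NullSingletonClass μ]
    (h1 : Integrable (fun p : ℝ × ℝ => p.1) π) (hmap : Measure.map Prod.fst π = μ)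
    (hrog : ∀ s : ℝ, 0 ≤ s →
      s * π.real {p : ℝ × ℝ | s ≤ p.2} ≤ ∫ p in {p : ℝ × ℝ | s ≤ p.2}, p.1 ∂π) :
    ∀ᵐ p ∂π, ∀ s : ℝ, 0 < s → s < p.2 → μ (Ioi s) ≠ 0 := by
  have h : ∀ r : ℚ, ∀ᵐ p ∂π, 0 < (r : ℝ) → μ (Ioi (r : ℝ)) = 0 → p.2 < (r : ℝ) := by
    intro r
    by_cases hr : 0 < (r : ℝ) ∧ μ (Ioi (r : ℝ)) = 0
    · filter_upwards [measure_eq_zero_iff_ae_notMem.1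
        (measure_snd_ge_eq_zero h1 hmap (hrog r hr.1.le) hr.2)] with p hp _ _
      exact not_le.1 hp
    · exact .of_forall fun p h0 h1 => absurd ⟨h0, h1⟩ hr
  filter_upwards [ae_all_iff.2 h] with p hp s hs hsp hμs
  obtain ⟨r, hsr, hrp⟩ := exists_rat_btwn hsp
  exact (hp r (hs.trans hsr) (measure_mono_null (Ioi_subset_Ioi hsr.le) hμs)).not_gt hrp

end RogersAdmissible

def dualIntegrand (μ : Measure ℝ) (a : ℝ → EReal) (Fs : ℝ × ℝ → ℝ) (p : ℝ × ℝ) (s : ℝ) : ℝ :=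
  rogersMultiplier μ a Fs s * (s - p.1) *
    ((if s ≤ p.2 then 1 else 0) - if s ≤ ridgeG μ a p.1 then 1 else 0)

section DualIntegrand

variable {μ : Measure ℝ} {π : Measure (ℝ × ℝ)} {a : ℝ → EReal} {F Fs : ℝ × ℝ → ℝ}
  {p : ℝ × ℝ}

theorem dualIntegrand_of_ridgeG_le (h : ridgeG μ a p.1 ≤ p.2) :
    dualIntegrand μ a Fs p =
      (Ioc (ridgeG μ a p.1) p.2).indicator fun s => rogersMultiplier μ a Fs s * (s - p.1) := by
  ext s
  simp only [dualIntegrand, indicator_apply, mem_Ioc]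
  split_ifs <;> grind

theorem dualIntegrand_of_le_ridgeG (h : p.2 ≤ ridgeG μ a p.1) :
    dualIntegrand μ a Fs p =
      -(Ioc p.2 (ridgeG μ a p.1)).indicator fun s => rogersMultiplier μ a Fs s * (s - p.1) := by
  ext s
  simp only [dualIntegrand, Pi.neg_apply, indicator_apply, mem_Ioc]
  split_ifs <;> grind

theorem measurable_dualIntegrand (hmult : Measurable (rogersMultiplier μ a Fs))
    (hg : Measurable (ridgeG μ a)) :
    Measurable fun z : (ℝ × ℝ) × ℝ => dualIntegrand μ a Fs z.1 z.2 := by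
  refine ((hmult.comp measurable_snd).mul (measurable_snd.sub measurable_fst.fst)).mul
    ((Measurable.ite ?_ measurable_const measurable_const).sub
      (Measurable.ite ?_ measurable_const measurable_const))
  · exact measurableSet_le measurable_snd measurable_fst.snd
  · exact measurableSet_le measurable_snd (hg.comp measurable_fst.fst)

theorem integrable_dualIntegrand_left [IsFiniteMeasure π]
    (hmult : Measurable (rogersMultiplier μ a Fs)) (hg : Measurable (ridgeG μ a))
    (h1 : Integrable (fun p : ℝ × ℝ => p.1) π) (s : ℝ) :
    Integrable (fun p => dualIntegrand μ a Fs p s) π := by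
  have hmult_nonneg := rogersMultiplier_nonneg μ a Fs s
  refine Integrable.mono'
    (((integrable_const |s|).add h1.abs).const_mul (rogersMultiplier μ a Fs s))
    ((measurable_dualIntegrand hmult hg).comp
      (measurable_id.prodMk measurable_const)).aestronglyMeasurable
    (.of_forall fun p => ?_)
  have hind : |((if s ≤ p.2 then 1 else 0) - if s ≤ ridgeG μ a p.1 then 1 else 0 : ℝ)| ≤ 1 := by
    split_ifs <;> norm_num
  rw [Real.norm_eq_abs, dualIntegrand, abs_mul, abs_mul, abs_of_nonneg hmult_nonneg]
  calc _ ≤ rogersMultiplier μ a Fs s * |s - p.1| * 1 := by gcongr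
    _ ≤ rogersMultiplier μ a Fs s * (|s| + |p.1|) := by
      rw [mul_one]
      gcongr
      exact abs_sub _ _

variable [IsProbabilityMeasure μ]

theorem integral_dualIntegrand_nonpos [NullSingletonClass μ] [IsFiniteMeasure π] (hμ : Centred μ)
    (hser : SerratedWithRidge F a)
    (hderiv : ∀ w s : ℝ, HasDerivAt (fun t : ℝ => F (w, t)) (Fs (w, s)) s)
    (hFs : Continuous Fs) (hg : Monotone (ridgeG μ a))
    (h1 : Integrable (fun p : ℝ × ℝ => p.1) π) (hmap : Measure.map Prod.fst π = μ)
    (hrog : ∀ s : ℝ, 0 ≤ s →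
      s * π.real {p : ℝ × ℝ | s ≤ p.2} ≤ ∫ p in {p : ℝ × ℝ | s ≤ p.2}, p.1 ∂π) (s : ℝ) :
    ∫ p, dualIntegrand μ a Fs p s ∂π ≤ 0 := by
  rcases eq_or_ne (rogersMultiplier μ a Fs s) 0 with h0 | h0
  · simp [dualIntegrand, h0]
  obtain ⟨hs, hpos⟩ := pos_and_partialDeriv_pos_of_rogersMultiplier_ne_zero h0
  set A := {p : ℝ × ℝ | s ≤ p.2}
  set G := {x : ℝ | s ≤ ridgeG μ a x}
  have hA : MeasurableSet A := measurable_snd measurableSet_Ici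
  have hG : MeasurableSet G := hg.measurable measurableSet_Ici
  have hπA : ∫ p in A, (s - p.1) ∂π ≤ 0 := setIntegral_sub_fst_nonpos h1 (hrog s hs.le)
  have hμG : 0 ≤ ∫ x in G, (s - x) ∂μ := by
    rw [setIntegral_congr_set (ridgeG_superlevel_ae_eq hμ hg hs), ← neg_nonpos,
      ← integral_neg]
    simpa using setIntegral_Ici_ridgeInv_sub_nonpos hμ hser hderiv hFs hs hpos
  have hfA : Integrable (A.indicator fun p => s - p.1) π :=
    ((integrable_const s).sub h1).indicator hA
  have hfG : Integrable (G.indicator fun x => s - x) μ :=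
    ((integrable_const s).sub hμ.1).indicator hG
  have hsplit : (fun p => dualIntegrand μ a Fs p s) = fun p => rogersMultiplier μ a Fs s *
      (A.indicator (fun p => s - p.1) p - G.indicator (fun x => s - x) p.1) := by
    ext p
    simp only [dualIntegrand, indicator_apply, A, G, mem_ofPred_eq]
    split_ifs <;> ring
  rw [hsplit, integral_const_mul, integral_sub hfA (hfG.comp_fst_of_map_eq hmap),
    integral_indicator hA, integral_comp_fst_of_map_eq hmap hfG.aestronglyMeasurable,
    integral_indicator hG]
  exact mul_nonpos_of_nonneg_of_nonpos (rogersMultiplier_nonneg μ a Fs s) (by linarith)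

theorem sub_le_integral_dualIntegrand (hμ : Centred μ) (hser : SerratedWithRidge F a)
    (hderiv : ∀ w s : ℝ, HasDerivAt (fun t : ℝ => F (w, t)) (Fs (w, s)) s)
    (hFs : Continuous Fs)
    (hratio : ∀ s₀ : ℝ, 0 < s₀ →
      StrictMonoOn (fun w : ℝ => Fs (w, s₀) / (s₀ - w)) (Iio s₀))
    (hg : Monotone (ridgeG μ a)) (hp : p ∈ MSet)
    (hIoi : ∀ s : ℝ, 0 < s → s < p.2 → μ (Ioi s) ≠ 0)
    (hsect : Integrable (dualIntegrand μ a Fs p)) :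
    F p - F (p.1, ridgeG μ a p.1) ≤ ∫ s, dualIntegrand μ a Fs p s := by
  obtain ⟨hy, hxy⟩ := hp
  have hftc : F p - F (p.1, ridgeG μ a p.1) = ∫ s in ridgeG μ a p.1..p.2, Fs (p.1, s) :=
    (integral_partialDeriv_eq_sub hderiv hFs).symm
  rcases le_total (ridgeG μ a p.1) p.2 with hgy | hyg
  · rw [dualIntegrand_of_ridgeG_le hgy] at hsect ⊢
    rw [integral_indicator measurableSet_Ioc, ← intervalIntegral.integral_of_le hgy, hftc]
    refine intervalIntegral.integral_mono_on_of_le_Ioo hgy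
      (intervalIntegrable_partialDeriv hFs _ _ _)
      ((intervalIntegrable_iff_integrableOn_Ioc_of_le hgy).2
        ((integrable_indicator_iff measurableSet_Ioc).1 hsect)) fun s hs => ?_
    have hs0 : 0 < s := (ridgeG_nonneg hμ a p.1).trans_lt hs.1
    exact partialDeriv_le_rogersMultiplier_mul hμ hser hderiv hratio hg hs0 hs.1
      (hIoi s hs0 hs.2)
  · rw [dualIntegrand_of_le_ridgeG hyg] at hsect ⊢
    rw [Pi.neg_def, integral_neg, integral_indicator measurableSet_Ioc,
      ← intervalIntegral.integral_of_le hyg, hftc, intervalIntegral.integral_symm,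
      neg_le_neg_iff]
    refine intervalIntegral.integral_mono_on_of_le_Ioo hyg
      ((intervalIntegrable_iff_integrableOn_Ioc_of_le hyg).2
        ((integrable_indicator_iff measurableSet_Ioc).1 (integrable_neg_iff.1 hsect)))
      (intervalIntegrable_partialDeriv hFs _ _ _) fun s hs => ?_
    exact rogersMultiplier_mul_le_partialDeriv hμ hser hderiv hratio (hy.trans_lt hs.1)
      (hxy.trans_lt hs.1) hs.2.le

theorem lintegral_ofReal_neg_dualIntegrand_le (hμ : Centred μ) (hser : SerratedWithRidge F a)
    (hderiv : ∀ w s : ℝ, HasDerivAt (fun t : ℝ => F (w, t)) (Fs (w, s)) s)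
    (hFs : Continuous Fs)
    (hratio : ∀ s₀ : ℝ, 0 < s₀ →
      StrictMonoOn (fun w : ℝ => Fs (w, s₀) / (s₀ - w)) (Iio s₀)) (hp : p ∈ MSet) :
    ∫⁻ s, ENNReal.ofReal (-dualIntegrand μ a Fs p s) ≤
      ENNReal.ofReal (|F (p.1, ridgeG μ a p.1)| + |F p|) := by
  obtain ⟨hy, hxy⟩ := hp
  rcases le_total (ridgeG μ a p.1) p.2 with hgy | hyg
  · have hzero (s : ℝ) : ENNReal.ofReal (-dualIntegrand μ a Fs p s) = 0 := by
      rw [dualIntegrand_of_ridgeG_le hgy, ENNReal.ofReal_eq_zero, neg_nonpos]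
      exact indicator_nonneg (fun s hs => mul_nonneg (rogersMultiplier_nonneg μ a Fs s)
        (sub_nonneg.2 ((le_ridgeG hμ.1 a p.1).trans hs.1.le))) s
    simp [hzero]
  set I := Ioc p.2 (ridgeG μ a p.1)
  have hFs_nonneg (s : ℝ) (hs : s ∈ I) : 0 ≤ Fs (p.1, s) := hser.partialDeriv_nonneg hderiv
    ((le_ridgeG_iff (hy.trans_lt hs.1) (hxy.trans_lt hs.1)).1 hs.2).2
  have hle (s : ℝ) : ENNReal.ofReal (-dualIntegrand μ a Fs p s) ≤
      I.indicator (fun s => ENNReal.ofReal (Fs (p.1, s))) s := by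
    rw [dualIntegrand_of_le_ridgeG hyg, Pi.neg_apply, neg_neg]
    by_cases hs : s ∈ I
    · rw [indicator_of_mem hs, indicator_of_mem hs]
      exact ENNReal.ofReal_le_ofReal (rogersMultiplier_mul_le_partialDeriv hμ hser hderiv hratio
        (hy.trans_lt hs.1) (hxy.trans_lt hs.1) hs.2)
    · rw [indicator_of_notMem hs, indicator_of_notMem hs, ENNReal.ofReal_zero]
  calc ∫⁻ s, ENNReal.ofReal (-dualIntegrand μ a Fs p s)
      ≤ ∫⁻ s in I, ENNReal.ofReal (Fs (p.1, s)) :=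
        (lintegral_mono hle).trans_eq (lintegral_indicator measurableSet_Ioc _)
    _ = ENNReal.ofReal (∫ s in p.2..ridgeG μ a p.1, Fs (p.1, s)) := by
        rw [intervalIntegral.integral_of_le hyg]
        exact (ofReal_integral_eq_lintegral_ofReal
          (intervalIntegrable_partialDeriv hFs p.1 _ _).1
          (ae_restrict_of_forall_mem measurableSet_Ioc hFs_nonneg)).symm
    _ ≤ ENNReal.ofReal (|F (p.1, ridgeG μ a p.1)| + |F p|) := by
        rw [integral_partialDeriv_eq_sub hderiv hFs, Prod.mk.eta]
        have := le_abs_self (F (p.1, ridgeG μ a p.1))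
        have := neg_abs_le (F p)
        exact ENNReal.ofReal_le_ofReal (by linarith)

theorem integrable_dualIntegrand_and_integral_nonpos [NullSingletonClass μ] [IsFiniteMeasure π]
    (hμ : Centred μ) (hser : SerratedWithRidge F a)
    (hderiv : ∀ w s : ℝ, HasDerivAt (fun t : ℝ => F (w, t)) (Fs (w, s)) s)
    (hFs : Continuous Fs)
    (hratio : ∀ s₀ : ℝ, 0 < s₀ →
      StrictMonoOn (fun w : ℝ => Fs (w, s₀) / (s₀ - w)) (Iio s₀))
    (hg : Monotone (ridgeG μ a)) (hπ : RogersAdmissible μ π) (hFπ : Integrable F π)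
    (hint : Integrable (fun w : ℝ => F (w, ridgeG μ a w)) μ) :
    Integrable (fun z : (ℝ × ℝ) × ℝ => dualIntegrand μ a Fs z.1 z.2) (π.prod volume) ∧
      ∫ z : (ℝ × ℝ) × ℝ, dualIntegrand μ a Fs z.1 z.2 ∂(π.prod volume) ≤ 0 := by
  obtain ⟨h1, -, hM, hrog, hmap⟩ := hπ
  have hmult := measurable_rogersMultiplier (a := a) hμ hFs
  have hneg : ∫⁻ z : (ℝ × ℝ) × ℝ, ENNReal.ofReal (-dualIntegrand μ a Fs z.1 z.2)
      ∂(π.prod volume) ≠ ⊤ := by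
    refine ((lintegral_prod_le _).trans ?_).trans_lt
      ((hint.comp_fst_of_map_eq hmap).abs.add hFπ.abs).lintegral_lt_top |>.ne
    refine lintegral_mono_ae ?_
    filter_upwards [mem_ae_iff.2 hM] with p hp
    exact lintegral_ofReal_neg_dualIntegrand_le hμ hser hderiv hFs hratio hp
  have hle (s : ℝ) : ∫ p, dualIntegrand μ a Fs p s ∂π ≤ 0 :=
    integral_dualIntegrand_nonpos hμ hser hderiv hFs hg h1 hmap hrog s
  have hΦ := integrable_prod_of_forall_integral_nonpos
    (measurable_dualIntegrand hmult hg.measurable).aestronglyMeasurable hneg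
    (integrable_dualIntegrand_left hmult hg.measurable h1) hle
  exact ⟨hΦ, (integral_prod_symm _ hΦ).trans_le (integral_nonpos hle)⟩

end DualIntegrand

theorem general_optimal_HK_general (μ : Measure ℝ) [IsProbabilityMeasure μ] [NullSingletonClass μ]
    (hμ : Centred μ)
    (F Fs : ℝ × ℝ → ℝ) (a : ℝ → EReal)
    (hser : SerratedWithRidge F a)
    (hderiv : ∀ w s : ℝ, HasDerivAt (fun t : ℝ => F (w, t)) (Fs (w, s)) s)
    (hFs_cont : Continuous Fs)
    (hratio : ∀ s₀ : ℝ, 0 < s₀ →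
      StrictMonoOn (fun w : ℝ => Fs (w, s₀) / (s₀ - w)) (Iio s₀))
    (hint : Integrable (fun w : ℝ => F (w, ridgeG μ a w)) μ)
    (π : Measure (ℝ × ℝ)) [IsProbabilityMeasure π]
    (hπ : RogersAdmissible μ π) (hFπ : Integrable F π) :
    (∫ p, F p ∂π) ≤ ∫ w, F (w, ridgeG μ a w) ∂μ := by
  have hg := ridgeG_mono hμ hser hderiv hratio
  obtain ⟨hΦ, hΦ_nonpos⟩ :=
    integrable_dualIntegrand_and_integral_nonpos hμ hser hderiv hFs_cont hratio hg hπ hFπ hint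
  obtain ⟨h1, -, hM, hrog, hmap⟩ := hπ
  have hFg := hint.comp_fst_of_map_eq hmap
  have hpath : ∀ᵐ p ∂π, F p - F (p.1, ridgeG μ a p.1) ≤ ∫ s, dualIntegrand μ a Fs p s := by
    filter_upwards [mem_ae_iff.2 hM, ae_measure_Ioi_ne_zero h1 hmap hrog, hΦ.prod_right_ae]
      with p hp hIoi hsect
    exact sub_le_integral_dualIntegrand hμ hser hderiv hFs_cont hratio hg hp hIoi hsect
  have hgap : ∫ p, F p ∂π - ∫ w, F (w, ridgeG μ a w) ∂μ ≤ 0 := calc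
    ∫ p, F p ∂π - ∫ w, F (w, ridgeG μ a w) ∂μ = ∫ p, (F p - F (p.1, ridgeG μ a p.1)) ∂π := by
      rw [integral_sub hFπ hFg, integral_comp_fst_of_map_eq hmap hint.aestronglyMeasurable]
    _ ≤ ∫ p, (∫ s, dualIntegrand μ a Fs p s) ∂π :=
      integral_mono_ae (hFπ.sub hFg) hΦ.integral_prod_left hpath
    _ = ∫ z : (ℝ × ℝ) × ℝ, dualIntegrand μ a Fs z.1 z.2 ∂(π.prod volume) :=
      (integral_prod _ hΦ).symm
    _ ≤ 0 := hΦ_nonpos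
  linarith

/-- optimality of the ridge law under the Hobson–Klimmek derivative
condition for serrated cost functions. -/
theorem general_optimal_HK (μ : Measure ℝ) [IsProbabilityMeasure μ] [NullSingletonClass μ]
    (hμ : Centred μ)
    (F Fs : ℝ × ℝ → ℝ) (a : ℝ → EReal)
    (hFc : Continuous F) (hser : SerratedWithRidge F a)
    (hderiv : ∀ w s : ℝ, HasDerivAt (fun t : ℝ => F (w, t)) (Fs (w, s)) s)
    (hFs_cont : Continuous Fs)
    (hratio : ∀ s₀ : ℝ, 0 < s₀ →
      StrictMonoOn (fun w : ℝ => Fs (w, s₀) / (s₀ - w)) (Iio s₀))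
    (hint : Integrable (fun w : ℝ => F (w, ridgeG μ a w)) μ)
    (π : Measure (ℝ × ℝ)) [IsProbabilityMeasure π]
    (hπ : RogersAdmissible μ π) (hFπ : Integrable F π) :
    (∫ p, F p ∂π) ≤ ∫ w, F (w, ridgeG μ a w) ∂μ :=
  general_optimal_HK_general μ hμ F Fs a hser hderiv hFs_cont hratio hint π hπ hFπ
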